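/- Fix a positive integer T, vectors g, m, w, d_1 ∈ ℝ^T with ‖m ⊙ w‖₂ ≠ 0, and ε > 0. Let c = ⟨w, m ⊙ d_1⟩ − ⟨g, d_1⟩. If d_2 = α · (m ⊙ w) for some α ≥ 0 and ‖d_2‖₂ > (√ε − c) / ‖m ⊙ w‖₂, then the squared prediction error satisfies (⟨w, m ⊙ (d_1 + d_2)⟩ − ⟨g, d_1⟩)² > ε. -/

import Mathlib

open scoped RealInnerProductSpace

/-- Entrywise (Hadamard) product of two vectors in Euclidean space. -/
noncomputable def had {T : ℕ} (a b : EuclideanSpace ℝ (Fin T)) : EuclideanSpace ℝ (Fin T) :=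
  WithLp.toLp 2 (fun i => a i * b i)

/-!
Along the direction `d₂ = α • (m ⊙ w)` the mask acts self-adjointly, so the prediction grows
by `⟪w, m ⊙ d₂⟫ = ⟪m ⊙ w, d₂⟫ = α ‖m ⊙ w‖² = ‖d₂‖ ‖m ⊙ w‖`. The prediction error is therefore
`c + ‖d₂‖ ‖m ⊙ w‖`, which the size assumption on `‖d₂‖` pushes above `√ε`.
-/

namespace had

variable {T : ℕ}

lemma add_right (m a b : EuclideanSpace ℝ (Fin T)) : had m (a + b) = had m a + had m b := by
  ext i
  simp [had, mul_add]

lemma inner_right_eq_inner_left (w m v : EuclideanSpace ℝ (Fin T)) :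
    ⟪w, had m v⟫ = ⟪had m w, v⟫ := by
  simp only [had, PiLp.inner_apply, RCLike.inner_apply, conj_trivial]
  exact Finset.sum_congr rfl fun i _ => by ring

lemma inner_add_smul_self (w m d : EuclideanSpace ℝ (Fin T)) (α : ℝ) :
    ⟪w, had m (d + α • had m w)⟫ = ⟪w, had m d⟫ + α * ‖had m w‖ ^ 2 := by
  rw [add_right, inner_add_right, inner_right_eq_inner_left w m (α • _), real_inner_smul_right,
    real_inner_self_eq_norm_sq]

end had

lemma norm_smul_mul_norm_of_nonneg {E : Type*} [SeminormedAddCommGroup E] [NormedSpace ℝ E]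
    {α : ℝ} (hα : 0 ≤ α) (u : E) : ‖α • u‖ * ‖u‖ = α * ‖u‖ ^ 2 := by
  rw [norm_smul, Real.norm_of_nonneg hα]
  ring

theorem stmt3_general (T : ℕ) (g m w d₁ : EuclideanSpace ℝ (Fin T))
    (hnz : ‖had m w‖ ≠ 0) (ε : ℝ)
    (c : ℝ) (hc : c = ⟪w, had m d₁⟫ - ⟪g, d₁⟫)
    (α : ℝ) (hα : 0 ≤ α) (d₂ : EuclideanSpace ℝ (Fin T)) (hd₂ : d₂ = α • had m w)
    (hbig : ‖d₂‖ > (Real.sqrt ε - c) / ‖had m w‖) :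
    (⟪w, had m (d₁ + d₂)⟫ - ⟪g, d₁⟫) ^ 2 > ε := by
  have hmw : 0 < ‖had m w‖ := (norm_nonneg _).lt_of_ne' hnz
  have herror : ⟪w, had m (d₁ + d₂)⟫ - ⟪g, d₁⟫ = c + ‖d₂‖ * ‖had m w‖ := by
    rw [hd₂, had.inner_add_smul_self, norm_smul_mul_norm_of_nonneg hα, hc]
    ring
  have hgrowth : Real.sqrt ε - c < ‖d₂‖ * ‖had m w‖ := (div_lt_iff₀ hmw).mp hbig
  exact Real.lt_sq_of_sqrt_lt (by linarith)

/-- If `‖m ⊙ w‖ ≠ 0`, `c = ⟪w, m ⊙ d₁⟫ - ⟪g, d₁⟫`, and the variant vector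
`d₂ = α • (m ⊙ w)` (with `α ≥ 0`) satisfies `‖d₂‖ > (√ε - c) / ‖m ⊙ w‖`, then
the squared prediction error exceeds `ε`. -/
theorem stmt3 (T : ℕ) (hT : 0 < T) (g m w d₁ : EuclideanSpace ℝ (Fin T))
    (hnz : ‖had m w‖ ≠ 0) (ε : ℝ) (hε : 0 < ε)
    (c : ℝ) (hc : c = ⟪w, had m d₁⟫ - ⟪g, d₁⟫)
    (α : ℝ) (hα : 0 ≤ α) (d₂ : EuclideanSpace ℝ (Fin T)) (hd₂ : d₂ = α • had m w)
    (hbig : ‖d₂‖ > (Real.sqrt ε - c) / ‖had m w‖) :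
    (⟪w, had m (d₁ + d₂)⟫ - ⟪g, d₁⟫) ^ 2 > ε :=
  stmt3_general T g m w d₁ hnz ε c hc α hα d₂ hd₂ hbig
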